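/- Let X be a finite nonempty set, T a row-stochastic transition matrix on X with minimal mixing rate γ := min_{i₁,i₂} ∑_j min{T(j | i₁), T(j | i₂)}, and p ∈ (0,1]. Let (P^k)_{k≥0} be probability distributions with P^k = T·P^{k−1} for k ≥ 1, and let (Q^k)_{k≥0} be probability distributions with δ(Q^0, P^0) ≤ 1 − p and δ(Q^k, T·Q^{k−1}) ≤ 1 − p for k ≥ 1. Then for all k ≥ 0, δ(P^k, Q^k) ≤ (1 − p) · ∑_{i=0}^{k} (1 − γ)^i. -/

import Mathlib

/-!
Write `e k` for the total variation distance between `P^k` and `Q^k`. Passing through `T·Q^k`,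
`e (k+1) ≤ δ(T·P^k, T·Q^k) + δ(T·Q^k, Q^{k+1}) ≤ (1 - γ) e k + (1 - p)`, where the contraction
`δ(T·μ, T·ν) ≤ (1 - γ) δ(μ, ν)` is Dobrushin's: split `μ - ν` into positive and negative parts of
equal mass `S`, so that `S · T(μ - ν)` is a nonnegative combination, of total weight `S²`, of
differences of two rows of `T`, each of `ℓ¹`-norm `2 - 2 ∑ min ≤ 2(1 - γ)`. Unrolling the
recursion gives the geometric sum.
-/

open Finset

lemma abs_sub_eq_add_sub_two_mul_min (a b : ℝ) : |a - b| = a + b - 2 * min a b := by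
  rw [abs_sub_comm, ← max_sub_min_eq_abs]
  linarith [min_add_max a b]

section FiniteSums

variable {ι κ : Type*} [Fintype ι] [Fintype κ]

lemma sum_abs_sub_eq_two_sub_two_mul_sum_min {u v : κ → ℝ} (hu : ∑ j, u j = 1)
    (hv : ∑ j, v j = 1) : ∑ j, |u j - v j| = 2 - 2 * ∑ j, min (u j) (v j) := by
  simp only [abs_sub_eq_add_sub_two_mul_min, sum_sub_distrib, sum_add_distrib, ← mul_sum, hu, hv]
  ring

lemma sum_negPart_eq_sum_posPart {d : ι → ℝ} (hd : ∑ i, d i = 0) :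
    ∑ i, (d i)⁻ = ∑ i, (d i)⁺ := by
  have : ∑ i, ((d i)⁺ - (d i)⁻) = 0 := by simpa only [posPart_sub_negPart] using hd
  rw [sum_sub_distrib] at this
  linarith

lemma sum_abs_eq_two_mul_sum_posPart {d : ι → ℝ} (hd : ∑ i, d i = 0) :
    ∑ i, |d i| = 2 * ∑ i, (d i)⁺ := by
  simp only [← posPart_add_negPart, sum_add_distrib, sum_negPart_eq_sum_posPart hd]
  ring

lemma sum_posPart_mul_sum_mul_eq {d : ι → ℝ} (hd : ∑ i, d i = 0) (f : ι → ℝ) :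
    (∑ i, (d i)⁺) * ∑ i, d i * f i = ∑ a, ∑ b, (d a)⁺ * (d b)⁻ * (f a - f b) := by
  have hsplit : ∑ i, d i * f i = ∑ i, (d i)⁺ * f i - ∑ i, (d i)⁻ * f i := by
    simp only [← sum_sub_distrib, ← sub_mul, posPart_sub_negPart]
  calc (∑ i, (d i)⁺) * ∑ i, d i * f i
      = (∑ a, (d a)⁺ * f a) * ∑ b, (d b)⁻ - (∑ a, (d a)⁺) * ∑ b, (d b)⁻ * f b := by
        rw [hsplit, sum_negPart_eq_sum_posPart hd]; ring
    _ = ∑ a, ∑ b, (d a)⁺ * (d b)⁻ * (f a - f b) := by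
        simp only [sum_mul_sum, ← sum_sub_distrib]
        refine sum_congr rfl fun a _ => sum_congr rfl fun b _ => ?_
        ring

lemma sum_abs_sum_mul_le_of_sum_abs_sub_le {T : ι → κ → ℝ} {c : ℝ}
    (hT : ∀ a b, ∑ j, |T a j - T b j| ≤ 2 * c) {d : ι → ℝ} (hd : ∑ i, d i = 0) :
    ∑ j, |∑ i, T i j * d i| ≤ c * ∑ i, |d i| := by
  set S := ∑ i, (d i)⁺ with hS_def
  have hpair : ∀ a b, 0 ≤ (d a)⁺ * (d b)⁻ := fun a b =>
    mul_nonneg (posPart_nonneg _) (negPart_nonneg _)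
  have hS_nonneg : 0 ≤ S := sum_nonneg fun i _ => posPart_nonneg _
  have hbound : S * ∑ j, |∑ i, T i j * d i| ≤ S * (c * ∑ i, |d i|) :=
    calc S * ∑ j, |∑ i, T i j * d i|
        = ∑ j, |S * ∑ i, d i * T i j| := by
          rw [mul_sum]
          refine sum_congr rfl fun j _ => ?_
          simp only [abs_mul, abs_of_nonneg hS_nonneg, mul_comm (T _ _)]
      _ = ∑ j, |∑ a, ∑ b, (d a)⁺ * (d b)⁻ * (T a j - T b j)| := by
          simp only [hS_def, sum_posPart_mul_sum_mul_eq hd]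
      _ ≤ ∑ j, ∑ a, ∑ b, (d a)⁺ * (d b)⁻ * |T a j - T b j| := by
          gcongr with j
          refine (abs_sum_le_sum_abs _ _).trans (sum_le_sum fun a _ => ?_)
          refine (abs_sum_le_sum_abs _ _).trans_eq (sum_congr rfl fun b _ => ?_)
          rw [abs_mul, abs_of_nonneg (hpair a b)]
      _ = ∑ a, ∑ b, (d a)⁺ * (d b)⁻ * ∑ j, |T a j - T b j| := by
          simp only [mul_sum]
          rw [sum_comm]
          exact sum_congr rfl fun a _ => sum_comm
      _ ≤ ∑ a, ∑ b, (d a)⁺ * (d b)⁻ * (2 * c) := by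
          gcongr with a _ b _
          exact hT a b
      _ = S * (c * ∑ i, |d i|) := by
          rw [sum_abs_eq_two_mul_sum_posPart hd, ← hS_def]
          simp only [← sum_mul, ← sum_mul_sum, sum_negPart_eq_sum_posPart hd, ← hS_def]
          ring
  rcases hS_nonneg.eq_or_lt with hS_zero | hS_pos
  · have hd_zero : ∀ i, d i = 0 := by
      have : ∑ i, |d i| = 0 := by rw [sum_abs_eq_two_mul_sum_posPart hd, ← hS_def, ← hS_zero]; ring
      intro i
      simpa using (sum_eq_zero_iff_of_nonneg fun i _ => abs_nonneg (d i)).mp this i (mem_univ i)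
    simp [hd_zero]
  · exact le_of_mul_le_mul_left hbound hS_pos

end FiniteSums

lemma le_mul_sum_range_pow_of_le_mul_add {e : ℕ → ℝ} {c ε : ℝ} (hc : 0 ≤ c) (h0 : e 0 ≤ ε)
    (hstep : ∀ k, e (k + 1) ≤ c * e k + ε) : ∀ k, e k ≤ ε * ∑ i ∈ range (k + 1), c ^ i
  | 0 => by simpa using h0
  | k + 1 =>
    calc e (k + 1) ≤ c * e k + ε := hstep k
      _ ≤ c * (ε * ∑ i ∈ range (k + 1), c ^ i) + ε := by
        gcongr
        exact le_mul_sum_range_pow_of_le_mul_add hc h0 hstep k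
      _ = ε * ∑ i ∈ range (k + 1 + 1), c ^ i := by rw [geom_sum_succ (n := k + 1)]; ring

theorem tv_dist_top_p_geometric_bound_general
    {X : Type*} [Fintype X] [Nonempty X]
    (T : X → X → ℝ) (hT1 : ∀ i, ∑ j, T i j = 1)
    (γ : ℝ)
    (hγ : γ = Finset.univ.inf' Finset.univ_nonempty
      (fun q : X × X => ∑ j, min (T q.1 j) (T q.2 j)))
    (p : ℝ)
    (P Q : ℕ → X → ℝ)
    (hPsum : ∀ k, ∑ x, P k x = 1)
    (hQsum : ∀ k, ∑ x, Q k x = 1)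
    (hPstep : ∀ k j, P (k + 1) j = ∑ i, T i j * P k i)
    (hQ0 : (1 / 2) * ∑ x, |Q 0 x - P 0 x| ≤ 1 - p)
    (hQstep : ∀ k, (1 / 2) * ∑ x, |Q (k + 1) x - ∑ i, T i x * Q k i| ≤ 1 - p) :
    ∀ k : ℕ, (1 / 2) * ∑ x, |P k x - Q k x| ≤
      (1 - p) * ∑ i ∈ Finset.range (k + 1), (1 - γ) ^ i := by
  have hγ_le : ∀ a b, γ ≤ ∑ j, min (T a j) (T b j) := fun a b =>
    hγ ▸ inf'_le (fun q : X × X => ∑ j, min (T q.1 j) (T q.2 j)) (mem_univ (a, b))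
  have hγ_le_one : γ ≤ 1 := by
    obtain ⟨i⟩ := ‹Nonempty X›
    simpa only [min_self, hT1 i] using hγ_le i i
  have hrow : ∀ a b, ∑ j, |T a j - T b j| ≤ 2 * (1 - γ) := fun a b => by
    rw [sum_abs_sub_eq_two_sub_two_mul_sum_min (hT1 a) (hT1 b)]
    linarith [hγ_le a b]
  refine le_mul_sum_range_pow_of_le_mul_add (sub_nonneg.2 hγ_le_one)
    (by simpa only [abs_sub_comm] using hQ0) fun k => ?_
  have hcontract := sum_abs_sum_mul_le_of_sum_abs_sub_le hrow (d := fun i => P k i - Q k i)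
    (by rw [sum_sub_distrib, hPsum, hQsum, sub_self])
  have htri : ∑ x, |P (k + 1) x - Q (k + 1) x|
      ≤ ∑ x, |∑ i, T i x * (P k i - Q k i)| + ∑ x, |Q (k + 1) x - ∑ i, T i x * Q k i| := by
    rw [← sum_add_distrib]
    gcongr with x
    simpa only [hPstep, mul_sub, sum_sub_distrib, abs_sub_comm (Q _ x)] using abs_sub_le _ _ _
  linarith [hQstep k]

/-- Let `T` be a row-stochastic transition matrix on a finite nonempty set `X`
with minimal mixing rate `γ`, and `p ∈ (0,1]`. Let `(P^k)` be probability distributions with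
`P^{k+1} = T·P^k`, and `(Q^k)` probability distributions with `δ(Q^0, P^0) ≤ 1 − p` and
`δ(Q^{k+1}, T·Q^k) ≤ 1 − p`. Then for all `k`,
`δ(P^k, Q^k) ≤ (1 − p) · ∑_{i=0}^{k} (1 − γ)^i`. -/
theorem tv_dist_top_p_geometric_bound
    {X : Type*} [Fintype X] [Nonempty X]
    (T : X → X → ℝ) (hT0 : ∀ i j, 0 ≤ T i j) (hT1 : ∀ i, ∑ j, T i j = 1)
    (γ : ℝ)
    (hγ : γ = Finset.univ.inf' Finset.univ_nonempty
      (fun q : X × X => ∑ j, min (T q.1 j) (T q.2 j)))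
    (p : ℝ) (hp0 : 0 < p) (hp1 : p ≤ 1)
    (P Q : ℕ → X → ℝ)
    (hPpos : ∀ k x, 0 ≤ P k x) (hPsum : ∀ k, ∑ x, P k x = 1)
    (hQpos : ∀ k x, 0 ≤ Q k x) (hQsum : ∀ k, ∑ x, Q k x = 1)
    (hPstep : ∀ k j, P (k + 1) j = ∑ i, T i j * P k i)
    (hQ0 : (1 / 2) * ∑ x, |Q 0 x - P 0 x| ≤ 1 - p)
    (hQstep : ∀ k, (1 / 2) * ∑ x, |Q (k + 1) x - ∑ i, T i x * Q k i| ≤ 1 - p) :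
    ∀ k : ℕ, (1 / 2) * ∑ x, |P k x - Q k x| ≤
      (1 - p) * ∑ i ∈ Finset.range (k + 1), (1 - γ) ^ i :=
  tv_dist_top_p_geometric_bound_general T hT1 γ hγ p P Q hPsum hQsum hPstep hQ0 hQstep
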